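/- Stability of the PWK vector: Let k be a positive definite kernel on ℝ² with bound B and Lipschitz constant L_k (i.e., ‖k(·,x)-k(·,y)‖_{H_k} ≤ L_k‖x-y‖_∞), and w a weight function vanishing on the diagonal Δ with Σ_{x∈D}|w(x)| ≤ W for all diagrams D in a class 𝒟, satisfying: for any D, E ∈ 𝒟 and any bijection γ : D ∪ Δ → E ∪ Δ, Σ_{x∈D∪Δ}|w(x)-w(γ(x))| ≤ L_w · sup_{x∈D∪Δ}‖x-γ(x)‖_∞. Then for any D, E ∈ 𝒟 and any such bijection γ, ‖V(D) - V(E)‖_{H_k} ≤ (L_k·W + √B·L_w) · sup_{x∈D∪Δ}‖x-γ(x)‖_∞. -/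
import Mathlib


open scoped RealInnerProductSpace

/-- stability of the PWK vector.  A multi-bijection
`γ : D ∪ Δ → E ∪ Δ` with finitely many off-diagonal matches is encoded by a common
finite index type `Fin n` and two families `D E : Fin n → ℝ²` (pairing `D i` with
`E i = γ (D i)`; points of the diagonal `Δ` serve as padding, and since the weight
function `w` vanishes on the diagonal they contribute nothing to the sums).
With `δ = sup_i ‖D i - E i‖_∞` (the cost of `γ`), hypotheses `|k| ≤ B`,
`‖k(·,x)-k(·,y)‖ ≤ L_k ‖x-y‖_∞`, `Σ|w| ≤ W` on diagrams of the class, and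
`Σ_i |w(D i) - w(E i)| ≤ L_w · δ`, one gets
`‖V(D) - V(E)‖ ≤ (L_k·W + √B·L_w) · δ`.  The norm on `ℝ × ℝ` is the sup-norm. -/
theorem pwk_stability {H : Type*}
    [NormedAddCommGroup H] [InnerProductSpace ℝ H]
    (k : (ℝ × ℝ) → (ℝ × ℝ) → ℝ) (Φ : (ℝ × ℝ) → H)
    (hfeat : ∀ x y, k x y = ⟪Φ x, Φ y⟫)
    (B : ℝ) (hB : 0 < B) (hbdd : ∀ x y, |k x y| ≤ B)
    (Lk : ℝ) (hLk : 0 < Lk) (hlip : ∀ x y, ‖Φ x - Φ y‖ ≤ Lk * ‖x - y‖)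
    (w : (ℝ × ℝ) → ℝ) (hdiag : ∀ x : ℝ × ℝ, x.1 = x.2 → w x = 0)
    (n : ℕ) (D E : Fin n → ℝ × ℝ)
    (W : ℝ) (hWD : ∑ i, |w (D i)| ≤ W) (hWE : ∑ i, |w (E i)| ≤ W)
    (δ : ℝ) (hδ : ∀ i, ‖D i - E i‖ ≤ δ)
    (Lw : ℝ) (hLw : 0 < Lw) (hwlip : ∑ i, |w (D i) - w (E i)| ≤ Lw * δ) :
    ‖(∑ i, w (D i) • Φ (D i)) - ∑ i, w (E i) • Φ (E i)‖
      ≤ (Lk * W + Real.sqrt B * Lw) * δ := by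

  have hδ0 : 0 ≤ δ := by
    nlinarith [Finset.sum_nonneg (fun i (_ : i ∈ Finset.univ) => abs_nonneg (w (D i) - w (E i)))]
  have hΦ : ∀ x, ‖Φ x‖ ≤ Real.sqrt B := by
    intro x
    have h1 : ‖Φ x‖ ^ 2 = k x x := by
      rw [hfeat]; rw [real_inner_self_eq_norm_sq]
    have := (abs_le.mp (hbdd x x)).2
    nlinarith [Real.sq_sqrt hB.le, Real.sqrt_nonneg B, norm_nonneg (Φ x),
      Real.sqrt_le_sqrt (show ‖Φ x‖^2 ≤ B by linarith)]
  have key : (∑ i, w (D i) • Φ (D i)) - ∑ i, w (E i) • Φ (E i)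
      = (∑ i, w (D i) • (Φ (D i) - Φ (E i))) + ∑ i, (w (D i) - w (E i)) • Φ (E i) := by
    rw [← Finset.sum_add_distrib, ← Finset.sum_sub_distrib]
    congr 1; funext i
    simp only [smul_sub, sub_smul]; abel
  rw [key]
  have h1 : ‖∑ i, w (D i) • (Φ (D i) - Φ (E i))‖ ≤ Lk * W * δ := by
    calc ‖∑ i, w (D i) • (Φ (D i) - Φ (E i))‖
        ≤ ∑ i, ‖w (D i) • (Φ (D i) - Φ (E i))‖ := norm_sum_le _ _
      _ ≤ ∑ i, |w (D i)| * (Lk * δ) := by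
          apply Finset.sum_le_sum
          intro i _
          rw [norm_smul, Real.norm_eq_abs]
          exact mul_le_mul_of_nonneg_left
            ((hlip _ _).trans (mul_le_mul_of_nonneg_left (hδ i) hLk.le)) (abs_nonneg _)
      _ = (∑ i, |w (D i)|) * (Lk * δ) := by rw [Finset.sum_mul]
      _ ≤ W * (Lk * δ) := by
          apply mul_le_mul_of_nonneg_right hWD
          positivity
      _ = Lk * W * δ := by ring
  have h2 : ‖∑ i, (w (D i) - w (E i)) • Φ (E i)‖ ≤ Real.sqrt B * Lw * δ := by
    calc ‖∑ i, (w (D i) - w (E i)) • Φ (E i)‖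
        ≤ ∑ i, ‖(w (D i) - w (E i)) • Φ (E i)‖ := norm_sum_le _ _
      _ ≤ ∑ i, |w (D i) - w (E i)| * Real.sqrt B := by
          apply Finset.sum_le_sum
          intro i _
          rw [norm_smul, Real.norm_eq_abs]
          exact mul_le_mul_of_nonneg_left (hΦ _) (abs_nonneg _)
      _ = (∑ i, |w (D i) - w (E i)|) * Real.sqrt B := by rw [Finset.sum_mul]
      _ ≤ (Lw * δ) * Real.sqrt B := by
          apply mul_le_mul_of_nonneg_right hwlip (Real.sqrt_nonneg B)
      _ = Real.sqrt B * Lw * δ := by ring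
  calc ‖(∑ i, w (D i) • (Φ (D i) - Φ (E i))) + ∑ i, (w (D i) - w (E i)) • Φ (E i)‖
      ≤ ‖∑ i, w (D i) • (Φ (D i) - Φ (E i))‖ + ‖∑ i, (w (D i) - w (E i)) • Φ (E i)‖ :=
        norm_add_le _ _
    _ ≤ Lk * W * δ + Real.sqrt B * Lw * δ := add_le_add h1 h2
    _ = (Lk * W + Real.sqrt B * Lw) * δ := by ring
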